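/- arXiv:1905.01157 — 5 statements merged into one kernel-verified Lean document; each statement's English description precedes it below -/
import Mathlib

section
/- Let X be a topological space and x ∈ X. The equivalence class of x under topological indistinguishability equals the intersection of all Borel sets of X containing x: {y : X | Inseparable y x} = ⋂₀ {B : Set X | MeasurableSet B ∧ x ∈ B}, where MeasurableSet is taken with respect to the Borel σ-algebra of X. -/
open MeasureTheory

lemma borel_mem_iff_of_inseparable {X : Type*} [TopologicalSpace X] {x y : X}
    (h : Inseparable y x) {B : Set X} (hB : MeasurableSet[borel X] B) : (y ∈ B ↔ x ∈ B) := by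
  rw [borel] at hB
  induction B, hB using MeasurableSpace.generateFrom_induction with
  | hC t ht _ => exact ⟨fun hy => (h.mem_open_iff ht).mp hy, fun hx => (h.mem_open_iff ht).mpr hx⟩
  | empty => simp
  | compl t ht ih => simpa using ih.not
  | iUnion s hs ih => simp only [Set.mem_iUnion, ih]

theorem inseparable_class_eq_sInter_borel {X : Type*} [TopologicalSpace X] (x : X) :
    {y : X | Inseparable y x} = ⋂₀ {B : Set X | MeasurableSet[borel X] B ∧ x ∈ B} := by
  ext y
  constructor
  · rintro (hy : Inseparable y x) B ⟨hB, hxB⟩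
    exact (borel_mem_iff_of_inseparable hy hB).mpr hxB
  · intro hy
    have key : ∀ U : Set X, IsOpen U → (y ∈ U ↔ x ∈ U) := by
      intro U hU
      constructor
      · intro hyU
        by_contra hxU
        have := hy Uᶜ ⟨(MeasurableSpace.measurableSet_generateFrom hU).compl, hxU⟩
        exact this hyU
      · intro hxU
        exact hy U ⟨MeasurableSpace.measurableSet_generateFrom hU, hxU⟩
    exact inseparable_iff_forall_isOpen.mpr key
end

section
/- Let X be a topological space. Then SeparationQuotient X is homeomorphic to a dense subspace of X: there exists a set S ⊆ X such that S is dense in X and the subspace S (with the subspace topology) is homeomorphic to SeparationQuotient X. -/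
/-!
Choose a representative `σ q` of every class `q`. Since `X` carries the topology induced by `mk`
and `mk ∘ σ = id`, the section `σ` is continuous, hence an embedding onto its range. Every point
`x` is inseparable from `σ (mk x)`, so lies in the closure of that range.
-/

open Function Set Topology

namespace SeparationQuotient

variable {X : Type*} [TopologicalSpace X] {σ : SeparationQuotient X → X}

theorem isEmbedding_of_leftInverse (h : LeftInverse mk σ) : IsEmbedding σ :=
  h.isEmbedding continuous_mk <|
    isInducing_mk.continuous_iff.2 <| by rw [h.comp_eq_id]; exact continuous_id

theorem denseRange_of_leftInverse (h : LeftInverse mk σ) : DenseRange σ := by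
  refine denseRange_iff_closure_range.2 <| eq_univ_of_forall fun x => ?_
  have hx : σ (mk x) ⤳ x := (mk_eq_mk.1 (h (mk x))).specializes
  exact closure_mono (singleton_subset_iff.2 (mem_range_self _)) (specializes_iff_mem_closure.1 hx)

end SeparationQuotient

theorem separationQuotient_homeomorph_dense_subspace {X : Type*} [TopologicalSpace X] :
    ∃ S : Set X, Dense S ∧ Nonempty (↥S ≃ₜ SeparationQuotient X) := by
  have hσ : LeftInverse SeparationQuotient.mk
      (surjInv (SeparationQuotient.surjective_mk (X := X))) :=
    rightInverse_surjInv _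
  exact ⟨_, SeparationQuotient.denseRange_of_leftInverse hσ,
    ⟨(SeparationQuotient.isEmbedding_of_leftInverse hσ).toHomeomorph.symm⟩⟩
end

section
/- Let X be a topological space and S ⊆ X a subspace. Then the Kolmogorov quotient of S is homeomorphic to a subspace of the Kolmogorov quotient of X; specifically, SeparationQuotient ↥S (where S carries the subspace topology) is homeomorphic to the subspace SeparationQuotient.mk '' S of SeparationQuotient X. -/
/-! Since `mk : X → SeparationQuotient X` is inducing, so is `s ↦ mk s` on `S`. An inducing map
into a T₀ space factors through the separation quotient of its domain as an embedding, and the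
image of that embedding is `mk '' S`. -/

open Filter Set Topology

namespace SeparationQuotient

variable {X : Type*} [TopologicalSpace X]

theorem range_lift {α : Type*} {g : X → α} (hg : ∀ x y, Inseparable x y → g x = g y) :
    range (lift g hg) = range g := by
  rw [← surjective_mk.range_comp, lift_comp_mk]

theorem isEmbedding_lift {Y : Type*} [TopologicalSpace Y] [T0Space Y] {f : X → Y}
    (hf : IsInducing f) : IsEmbedding (lift f fun _ _ h ↦ (h.map hf.continuous).eq) := by
  constructor
  · refine isInducing_iff_nhds.2 <| surjective_mk.forall.2 fun x ↦ ?_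
    rw [← map_mk_nhds, hf.nhds_eq_comap, lift_mk]
    conv_lhs => rw [← lift_comp_mk (fun _ _ h ↦ (h.map hf.continuous).eq), ← comap_comap]
    exact map_comap_of_surjective surjective_mk _
  · refine surjective_mk.forall₂.2 fun x y hxy ↦ mk_eq_mk.2 ?_
    rw [lift_mk, lift_mk] at hxy
    exact hf.inseparable_iff.1 (hxy ▸ .refl _)

end SeparationQuotient

open SeparationQuotient

theorem separationQuotient_subspace_homeomorph {X : Type*} [TopologicalSpace X] (S : Set X) :
    Nonempty (SeparationQuotient ↥S ≃ₜ ↥(SeparationQuotient.mk '' S)) := by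
  have hS : IsInducing (mk ∘ Subtype.val : S → SeparationQuotient X) :=
    isInducing_mk.comp .subtypeVal
  refine ⟨(isEmbedding_lift hS).toHomeomorph.trans (.setCongr ?_)⟩
  rw [range_lift, range_comp, Subtype.range_coe]
end

section
/- Let I be an index set and (X i)_{i ∈ I} a family of topological spaces. Then the Kolmogorov quotient of the product is homeomorphic to the product of the Kolmogorov quotients: SeparationQuotient (∀ i, X i) ≃ₜ ∀ i, SeparationQuotient (X i), where the products carry the product topology; moreover the homeomorphism f satisfies f (mk z) i = mk (z i) for all z and i. -/
/-! Products of open quotient maps are open quotient maps, and points of a product are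
inseparable iff they are coordinatewise inseparable. So the product of the maps `mk` is an open
quotient map whose fibres are exactly the inseparability classes, and it descends to a
homeomorphism on the Kolmogorov quotient of the product. -/

open SeparationQuotient

namespace SeparationQuotient

variable {X Y : Type*} [TopologicalSpace X] [TopologicalSpace Y]

theorem isHomeomorph_lift_of_isOpenQuotientMap {f : X → Y} (hf : IsOpenQuotientMap f)
    (hfib : ∀ x y, f x = f y ↔ Inseparable x y) :
    IsHomeomorph (lift f fun x y h ↦ (hfib x y).2 h) := by
  have hq : IsOpenQuotientMap (lift f fun x y h ↦ (hfib x y).2 h) := by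
    rwa [← isOpenQuotientMap_mk.of_comp_iff, lift_comp_mk]
  refine ⟨hq.continuous, hq.isOpenMap, ?_, hq.surjective⟩
  rintro ⟨x⟩ ⟨y⟩ h
  exact mk_eq_mk.2 ((hfib x y).1 h)

theorem piMap_mk_eq_piMap_mk_iff {I : Type*} {X : I → Type*} [∀ i, TopologicalSpace (X i)]
    {x y : ∀ i, X i} : Pi.map (fun _ ↦ mk) x = Pi.map (fun _ ↦ mk) y ↔ Inseparable x y := by
  simp only [funext_iff, Pi.map_apply, mk_eq_mk, inseparable_pi]

end SeparationQuotient

theorem separationQuotient_pi_homeomorph {I : Type*} (X : I → Type*)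
    [∀ i, TopologicalSpace (X i)] :
    ∃ f : SeparationQuotient (∀ i, X i) ≃ₜ ∀ i, SeparationQuotient (X i),
      ∀ (z : ∀ i, X i) (i : I),
        f (SeparationQuotient.mk z) i = SeparationQuotient.mk (z i) := by
  have hmk : IsOpenQuotientMap (Pi.map fun i ↦ (mk : X i → SeparationQuotient (X i))) :=
    .piMap fun _ ↦ isOpenQuotientMap_mk
  exact ⟨(isHomeomorph_lift_of_isOpenQuotientMap hmk
    fun _ _ ↦ piMap_mk_eq_piMap_mk_iff).homeomorph, fun _ _ ↦ rfl⟩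
end

section
/- Let X be an Alexandrov-discrete topological space. Then the quotient map mk : X → SeparationQuotient X is a homotopy equivalence: there exists a continuous map g : SeparationQuotient X → X such that g ∘ mk is homotopic to the identity of X and mk ∘ g is homotopic to the identity of SeparationQuotient X (equivalently, there exists a ContinuousMap.HomotopyEquiv between X and SeparationQuotient X whose forward map is mk). -/
open Classical in
theorem homotopic_of_inseparable' {X Y : Type*} [TopologicalSpace X] [TopologicalSpace Y]
    (f g : C(X, Y)) (h : ∀ x, Inseparable (f x) (g x)) : f.Homotopic g := by
  refine ⟨{ toFun := fun p => if p.1 = 1 then g p.2 else f p.2,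
            continuous_toFun := ?_,
            map_zero_left := fun x => by norm_num,
            map_one_left := fun x => by simp }⟩
  rw [continuous_def]
  intro U hU
  have hset : (fun p : unitInterval × X => if p.1 = 1 then g p.2 else f p.2) ⁻¹' U
      = Set.univ ×ˢ (f ⁻¹' U) := by
    ext p
    simp only [Set.mem_preimage, Set.mem_prod, Set.mem_univ, true_and]
    split_ifs with h1
    · exact ((h p.2).mem_open_iff hU).symm
    · rfl
  rw [hset]
  exact isOpen_univ.prod (hU.preimage f.continuous)

theorem separationQuotient_mk_homotopyEquiv {X : Type*} [TopologicalSpace X]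
    [AlexandrovDiscrete X] :
    ∃ e : ContinuousMap.HomotopyEquiv X (SeparationQuotient X),
      ⇑e.toFun = SeparationQuotient.mk := by
  classical
  set g : SeparationQuotient X → X :=
    Function.surjInv SeparationQuotient.surjective_mk with hg
  have hmkg : ∀ q, SeparationQuotient.mk (g q) = q := fun q =>
    Function.surjInv_eq SeparationQuotient.surjective_mk q
  have hins : ∀ x : X, Inseparable (g (SeparationQuotient.mk x)) x := fun x =>
    SeparationQuotient.mk_eq_mk.mp (hmkg _)
  have hgc : Continuous g := by
    rw [continuous_def]
    intro U hU
    rw [← SeparationQuotient.isQuotientMap_mk.isOpen_preimage]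
    have : SeparationQuotient.mk ⁻¹' (g ⁻¹' U) = U := by
      ext x
      exact (hins x).mem_open_iff hU
    rwa [this]
  refine ⟨{ toFun := ⟨SeparationQuotient.mk, SeparationQuotient.continuous_mk⟩,
            invFun := ⟨g, hgc⟩,
            left_inv := ?_, right_inv := ?_ }, rfl⟩
  · exact homotopic_of_inseparable' _ _ fun x => hins x
  · exact homotopic_of_inseparable' _ _ fun q => by
      simp only [ContinuousMap.comp_apply, ContinuousMap.coe_mk, ContinuousMap.id_apply, hmkg]
      exact Inseparable.refl q
end
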